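/- Let $r_0 \ge 1$, $A,B,K>0$, $\lambda>1$, and let $f:(r_0,\infty)\to(0,\infty)$ satisfy $f(r) \le A r\log r + B\sqrt{r}\sqrt{f(\lambda r)}$ and $f(r) \le K r^3$ for all $r>r_0$. Then for every natural number $n$ and every $r > r_1$ (where $r_1 \ge r_0$ is chosen so that $B\sqrt{\lambda}\sqrt{A\log(\lambda r)+(\log(\lambda r))^{2/3}} \le (\log r)^{2/3}$ for all $r > r_1$), one has $f(r) \le A r\log r + r(\log r)^{2/3} + B^{2-2^{-n}} K^{2^{-n-1}} \lambda^2 r^{1+2^{-n}}$. -/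
import Mathlib


open Real

theorem sqrt_add_le' (a b : ℝ) (ha : 0 ≤ a) (hb : 0 ≤ b) :
    Real.sqrt (a + b) ≤ Real.sqrt a + Real.sqrt b := by
  have h : a + b ≤ (Real.sqrt a + Real.sqrt b) ^ 2 := by
    nlinarith [Real.sq_sqrt ha, Real.sq_sqrt hb, Real.sqrt_nonneg a, Real.sqrt_nonneg b]
  calc Real.sqrt (a + b) ≤ Real.sqrt ((Real.sqrt a + Real.sqrt b) ^ 2) := Real.sqrt_le_sqrt h
    _ = Real.sqrt a + Real.sqrt b := Real.sqrt_sq (by positivity)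

theorem stmt1 (r0 A B K lam r1 : ℝ) (hr0 : 1 ≤ r0) (hA : 0 < A) (hB : 0 < B)
    (hK : 0 < K) (hlam : 1 < lam) (f : ℝ → ℝ)
    (hpos : ∀ r, r0 < r → 0 < f r)
    (h1 : ∀ r, r0 < r →
      f r ≤ A * (r * Real.log r) + B * Real.sqrt r * Real.sqrt (f (lam * r)))
    (h2 : ∀ r, r0 < r → f r ≤ K * r ^ 3)
    (hr1 : r0 ≤ r1)
    (hr1' : ∀ r, r1 < r →
      B * Real.sqrt lam *
          Real.sqrt (A * Real.log (lam * r) + Real.log (lam * r) ^ ((2 : ℝ) / 3)) ≤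
        Real.log r ^ ((2 : ℝ) / 3)) :
    ∀ n : ℕ, ∀ r, r1 < r →
      f r ≤ A * (r * Real.log r) + r * Real.log r ^ ((2 : ℝ) / 3) +
        B ^ (2 - (2 : ℝ) ^ (-(n : ℝ))) * K ^ ((2 : ℝ) ^ (-(n : ℝ) - 1)) *
          lam ^ 2 * r ^ (1 + (2 : ℝ) ^ (-(n : ℝ))) := by
  have hlam0 : (0:ℝ) < lam := by linarith
  have h1r1 : (1:ℝ) ≤ r1 := le_trans hr0 hr1
  -- the key absorption step
  have key : ∀ C : ℝ, 0 ≤ C → ∀ e : ℝ, 0 < e →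
      (∀ r, r1 < r → f r ≤ A * (r * Real.log r) + r * Real.log r ^ ((2:ℝ)/3) +
        C * r ^ ((1:ℝ)+e)) →
      ∀ r, r1 < r → f r ≤ A * (r * Real.log r) + r * Real.log r ^ ((2:ℝ)/3) +
        (B * Real.sqrt C * lam ^ (((1:ℝ)+e)/2)) * r ^ ((1:ℝ)+e/2) := by
    intro C hC e he hyp r hr
    have hr1lt : (1:ℝ) < r := lt_of_le_of_lt h1r1 hr
    have hrpos : (0:ℝ) < r := by linarith
    have hr0r : r0 < r := lt_of_le_of_lt hr1 hr
    have hlamr : r1 < lam * r := by nlinarith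
    have hlamrpos : (0:ℝ) < lam * r := by positivity
    have hL : 0 < Real.log (lam * r) := Real.log_pos (by nlinarith)
    have hstuff : (0:ℝ) ≤ A * Real.log (lam * r) + Real.log (lam * r) ^ ((2:ℝ)/3) := by
      positivity
    have hflam := hyp (lam * r) hlamr
    have hsplit : f (lam * r) ≤
        (lam * r) * (A * Real.log (lam * r) + Real.log (lam * r) ^ ((2:ℝ)/3)) +
          C * (lam * r) ^ ((1:ℝ)+e) := by
      have h5 : A * ((lam * r) * Real.log (lam * r)) +
          (lam * r) * Real.log (lam * r) ^ ((2:ℝ)/3) =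
          (lam * r) * (A * Real.log (lam * r) + Real.log (lam * r) ^ ((2:ℝ)/3)) := by ring
      linarith [hflam, h5.symm.le]
    set T1 : ℝ := (lam * r) * (A * Real.log (lam * r) + Real.log (lam * r) ^ ((2:ℝ)/3))
      with hT1
    set T2 : ℝ := C * (lam * r) ^ ((1:ℝ)+e) with hT2
    have hT1n : 0 ≤ T1 := by positivity
    have hT2n : 0 ≤ T2 := by positivity
    have hs : Real.sqrt (f (lam * r)) ≤ Real.sqrt T1 + Real.sqrt T2 :=
      le_trans (Real.sqrt_le_sqrt hsplit) (sqrt_add_le' T1 T2 hT1n hT2n)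
    -- bound B √r √T1 ≤ r (log r)^(2/3)
    have hbT1 : B * Real.sqrt r * Real.sqrt T1 ≤ r * Real.log r ^ ((2:ℝ)/3) := by
      have e1 : Real.sqrt T1 = Real.sqrt lam * Real.sqrt r *
          Real.sqrt (A * Real.log (lam * r) + Real.log (lam * r) ^ ((2:ℝ)/3)) := by
        rw [hT1, Real.sqrt_mul hlamrpos.le, Real.sqrt_mul hlam0.le]
      have e2 : B * Real.sqrt r * Real.sqrt T1 =
          (Real.sqrt r * Real.sqrt r) * (B * Real.sqrt lam *
            Real.sqrt (A * Real.log (lam * r) + Real.log (lam * r) ^ ((2:ℝ)/3))) := by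
        rw [e1]; ring
      rw [e2, Real.mul_self_sqrt hrpos.le]
      exact mul_le_mul_of_nonneg_left (hr1' r hr) hrpos.le
    -- compute B √r √T2
    have hbT2 : B * Real.sqrt r * Real.sqrt T2 =
        (B * Real.sqrt C * lam ^ (((1:ℝ)+e)/2)) * r ^ ((1:ℝ)+e/2) := by
      have h3 : Real.sqrt T2 =
          Real.sqrt C * (lam ^ (((1:ℝ)+e)/2) * r ^ (((1:ℝ)+e)/2)) := by
        rw [hT2, Real.sqrt_mul hC, Real.sqrt_eq_rpow ((lam*r) ^ ((1:ℝ)+e)),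
          ← Real.rpow_mul hlamrpos.le, show ((1:ℝ)+e)*(1/2) = (1+e)/2 by ring,
          Real.mul_rpow hlam0.le hrpos.le]
      have h4 : r ^ ((1:ℝ)/2) * r ^ (((1:ℝ)+e)/2) = r ^ ((1:ℝ)+e/2) := by
        rw [← Real.rpow_add hrpos]
        congr 1; ring
      rw [h3, Real.sqrt_eq_rpow r]
      calc B * r ^ ((1:ℝ)/2) *
            (Real.sqrt C * (lam ^ (((1:ℝ)+e)/2) * r ^ (((1:ℝ)+e)/2)))
          = (B * Real.sqrt C * lam ^ (((1:ℝ)+e)/2)) *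
              (r ^ ((1:ℝ)/2) * r ^ (((1:ℝ)+e)/2)) := by ring
        _ = _ := by rw [h4]
    have hmain := h1 r hr0r
    have hB' : 0 ≤ B * Real.sqrt r := by positivity
    have hcomb : B * Real.sqrt r * Real.sqrt (f (lam * r)) ≤
        B * Real.sqrt r * Real.sqrt T1 + B * Real.sqrt r * Real.sqrt T2 := by
      nlinarith [mul_le_mul_of_nonneg_left hs hB']
    linarith [hbT1, hbT2.le, hbT2.ge]
  -- base bound with exponent 2
  have base : ∀ r, r1 < r → f r ≤ A * (r * Real.log r) + r * Real.log r ^ ((2:ℝ)/3) +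
      K * r ^ ((1:ℝ)+2) := by
    intro r hr
    have hr1lt : (1:ℝ) < r := lt_of_le_of_lt h1r1 hr
    have hrpos : (0:ℝ) < r := by linarith
    have hlog : 0 < Real.log r := Real.log_pos hr1lt
    have h3 : r ^ ((1:ℝ)+2) = r ^ (3:ℕ) := by
      rw [show (1:ℝ)+2 = ((3:ℕ):ℝ) by norm_num, Real.rpow_natCast]
    have hb := h2 r (lt_of_le_of_lt hr1 hr)
    have hpos1 : 0 ≤ A * (r * Real.log r) := by positivity
    have hpos2 : 0 ≤ r * Real.log r ^ ((2:ℝ)/3) := by positivity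
    rw [h3]; linarith
  intro n
  induction n with
  | zero =>
    intro r hr
    have h0 := key K hK.le 2 two_pos base r hr
    have hrpos : (0:ℝ) < r := by linarith
    have hlam32 : lam ^ (((1:ℝ)+2)/2) ≤ lam ^ ((2:ℕ):ℝ) :=
      Real.rpow_le_rpow_of_exponent_le hlam.le (by norm_num)
    have hrp : (0:ℝ) ≤ r ^ ((1:ℝ)+2/2) := Real.rpow_nonneg hrpos.le _
    have heq : ((1:ℝ)+2/2) = 1 + (2:ℝ)^(-(↑(0:ℕ):ℝ)) := by norm_num
    have heqc : B ^ (2 - (2:ℝ)^(-(↑(0:ℕ):ℝ))) * K ^ ((2:ℝ)^(-(↑(0:ℕ):ℝ) - 1)) =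
        B * Real.sqrt K := by
      rw [show -(↑(0:ℕ):ℝ) = 0 by norm_num, Real.rpow_zero,
        show (0:ℝ) - 1 = -1 by norm_num, Real.rpow_neg_one,
        show (2:ℝ) - 1 = 1 by norm_num, Real.rpow_one, Real.sqrt_eq_rpow]
      norm_num
    have hBK : (0:ℝ) ≤ B * Real.sqrt K := by positivity
    have hcoef : B * Real.sqrt K * lam ^ (((1:ℝ)+2)/2) ≤ B * Real.sqrt K * lam ^ (2:ℕ) := by
      rw [← Real.rpow_natCast lam 2]
      exact mul_le_mul_of_nonneg_left hlam32 hBK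
    calc f r ≤ A * (r * Real.log r) + r * Real.log r ^ ((2:ℝ)/3) +
          (B * Real.sqrt K * lam ^ (((1:ℝ)+2)/2)) * r ^ ((1:ℝ)+2/2) := h0
      _ ≤ A * (r * Real.log r) + r * Real.log r ^ ((2:ℝ)/3) +
          (B * Real.sqrt K * lam ^ (2:ℕ)) * r ^ ((1:ℝ)+2/2) := by
          have := mul_le_mul_of_nonneg_right hcoef hrp
          linarith
      _ = _ := by rw [heq, ← heqc]
  | succ n ih =>
    intro r hr
    set en : ℝ := (2:ℝ)^(-(n:ℝ)) with hen
    have hen0 : 0 < en := Real.rpow_pos_of_pos two_pos _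
    have hen1 : en ≤ 1 := Real.rpow_le_one_of_one_le_of_nonpos (by norm_num)
      (neg_nonpos.mpr (Nat.cast_nonneg n))
    set C : ℝ := B ^ (2 - en) * K ^ ((2:ℝ)^(-(n:ℝ) - 1)) * lam ^ 2 with hCdef
    have hCpos : (0:ℝ) < C := by positivity
    have h0 := key C hCpos.le en hen0 ih r hr
    have hrpos : (0:ℝ) < r := by linarith
    -- √C
    have hsq : Real.sqrt C = B ^ ((2 - en)/2) * K ^ ((2:ℝ)^(-(n:ℝ) - 1)/2) * lam := by
      have hBsq : (B ^ ((2 - en)/2)) ^ (2:ℕ) = B ^ (2 - en) := by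
        rw [← Real.rpow_natCast (B ^ ((2 - en)/2)) 2, ← Real.rpow_mul hB.le]
        norm_num
      have hKsq : (K ^ ((2:ℝ)^(-(n:ℝ) - 1)/2)) ^ (2:ℕ) = K ^ ((2:ℝ)^(-(n:ℝ) - 1)) := by
        rw [← Real.rpow_natCast (K ^ ((2:ℝ)^(-(n:ℝ) - 1)/2)) 2, ← Real.rpow_mul hK.le]
        norm_num
      have hCsq : C = (B ^ ((2 - en)/2) * K ^ ((2:ℝ)^(-(n:ℝ) - 1)/2) * lam) ^ (2:ℕ) := by
        rw [mul_pow, mul_pow, hBsq, hKsq, hCdef]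
      rw [hCsq, Real.sqrt_sq (by positivity)]
    -- exponent arithmetic
    have hcast : (↑(n+1) : ℝ) = (n:ℝ) + 1 := by push_cast; ring
    have hsucc : (2:ℝ)^(-(↑(n+1):ℝ)) = en / 2 := by
      rw [hcast, show -((n:ℝ)+1) = -(n:ℝ) + (-1) by ring, Real.rpow_add two_pos,
        Real.rpow_neg_one, hen]
      ring
    have hBexp : B * B ^ ((2 - en)/2) = B ^ (2 - en/2) := by
      nth_rewrite 1 [← Real.rpow_one B]
      rw [← Real.rpow_add hB]
      congr 1; ring
    have hKexp : K ^ ((2:ℝ)^(-(n:ℝ) - 1)/2) = K ^ ((2:ℝ)^(-(↑(n+1):ℝ) - 1)) := by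
      congr 1
      rw [hcast, show -((n:ℝ)+1) - 1 = (-(n:ℝ)-1) + (-1) by ring, Real.rpow_add two_pos,
        Real.rpow_neg_one]
      ring
    have hlamexp : lam * lam ^ (((1:ℝ)+en)/2) ≤ lam ^ (2:ℕ) := by
      nth_rewrite 1 [← Real.rpow_one lam]
      rw [← Real.rpow_add hlam0, ← Real.rpow_natCast lam 2]
      exact Real.rpow_le_rpow_of_exponent_le hlam.le (by push_cast; linarith)
    -- combine
    have hnewcoef : B * Real.sqrt C * lam ^ (((1:ℝ)+en)/2) ≤
        B ^ (2 - en/2) * K ^ ((2:ℝ)^(-(↑(n+1):ℝ) - 1)) * lam ^ 2 := by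
      rw [hsq, ← hKexp]
      have hBK : (0:ℝ) < B ^ (2 - en/2) * K ^ ((2:ℝ)^(-(n:ℝ) - 1)/2) := by positivity
      calc B * (B ^ ((2 - en)/2) * K ^ ((2:ℝ)^(-(n:ℝ) - 1)/2) * lam) * lam ^ (((1:ℝ)+en)/2)
          = (B * B ^ ((2 - en)/2)) * K ^ ((2:ℝ)^(-(n:ℝ) - 1)/2) *
              (lam * lam ^ (((1:ℝ)+en)/2)) := by ring
        _ = B ^ (2 - en/2) * K ^ ((2:ℝ)^(-(n:ℝ) - 1)/2) *
              (lam * lam ^ (((1:ℝ)+en)/2)) := by rw [hBexp]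
        _ ≤ B ^ (2 - en/2) * K ^ ((2:ℝ)^(-(n:ℝ) - 1)/2) * lam ^ (2:ℕ) :=
            mul_le_mul_of_nonneg_left hlamexp hBK.le
    have hrp : (0:ℝ) ≤ r ^ ((1:ℝ)+en/2) := Real.rpow_nonneg hrpos.le _
    have hfinal : (B * Real.sqrt C * lam ^ (((1:ℝ)+en)/2)) * r ^ ((1:ℝ)+en/2) ≤
        B ^ (2 - en/2) * K ^ ((2:ℝ)^(-(↑(n+1):ℝ) - 1)) * lam ^ 2 * r ^ ((1:ℝ)+en/2) :=
      mul_le_mul_of_nonneg_right hnewcoef hrp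
    have hgoal : B ^ (2 - (2:ℝ)^(-(↑(n+1):ℝ))) * K ^ ((2:ℝ)^(-(↑(n+1):ℝ) - 1)) *
        lam ^ 2 * r ^ (1 + (2:ℝ)^(-(↑(n+1):ℝ))) =
        B ^ (2 - en/2) * K ^ ((2:ℝ)^(-(↑(n+1):ℝ) - 1)) * lam ^ 2 * r ^ ((1:ℝ)+en/2) := by
      rw [hsucc]
    rw [hgoal]
    linarith [h0, hfinal]
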